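/- arXiv:2411.18316 — 5 statements merged into one kernel-verified Lean document; each statement's English description precedes it below -/
import Mathlib

section
/- Let p be a prime, r ≥ 1, and R = ℤ/p^rℤ. A submodule C ⊆ R^n of rank k admits an encoder, i.e. an injective matrix G ∈ Mat_{n×k}(R) whose column space equals C, if and only if C is a direct summand of the R-module R^n. -/
/-!
`ZMod (p ^ r)` is an Artinian local ring, and both directions hold over any such ring.
A direct summand of `R ^ n` is projective, hence free over a local ring, and a basis of it is an
encoder. Conversely, an injective `G` stays injective modulo the maximal ideal `𝔪`: if `G v ∈ 𝔪 ^ n`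
with some `v j` a unit, then a nonzero `s` with `s 𝔪 = 0` (here `p ^ (r - 1)`) gives `s v ≠ 0` and
`G (s v) = 0`. A left inverse of `G` over the residue field lifts to `B` with `det (B G)` a unit,
so `(B G)⁻¹ B` is a left inverse of `G`, and its kernel complements the column space.
-/

open IsLocalRing LinearMap Function
open scoped Matrix

theorem LinearMap.isCompl_range_ker_of_comp_eq_id {R M N : Type*} [Ring R] [AddCommGroup M]
    [Module R M] [AddCommGroup N] [Module R N] {f : M →ₗ[R] N} {g : N →ₗ[R] M}
    (h : g ∘ₗ f = LinearMap.id) : IsCompl (range f) (ker g) := by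
  have hf : Injective f := HasLeftInverse.injective ⟨g, LinearMap.congr_fun h⟩
  have hg : Surjective g := HasRightInverse.surjective ⟨f, LinearMap.congr_fun h⟩
  have hidem : IsIdempotentElem (f ∘ₗ g) :=
    LinearMap.ext fun x => congrArg f (LinearMap.congr_fun h (g x))
  simpa [range_comp_of_range_eq_top f (range_eq_top.mpr hg),
    ker_comp_of_ker_eq_bot g (ker_eq_bot.mpr hf)] using hidem.isCompl

theorem ZMod.isLocalRing_prime_pow {p r : ℕ} [Fact p.Prime] (hr : r ≠ 0) :
    IsLocalRing (ZMod (p ^ r)) :=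
  have : Fact (1 < p ^ r) := ⟨Nat.one_lt_pow hr (Fact.out : p.Prime).one_lt⟩
  .of_surjective' (PadicInt.toZModPow r) fun x => ⟨x.val, by simp⟩

theorem IsLocalRing.exists_ne_zero_forall_mem_maximalIdeal_mul_eq_zero (R : Type*) [CommRing R]
    [IsLocalRing R] [IsArtinianRing R] : ∃ s : R, s ≠ 0 ∧ ∀ x ∈ maximalIdeal R, x * s = 0 := by
  obtain ⟨P, hP⟩ := associatedPrimes.nonempty R R
  obtain ⟨hPprime, s, hPs⟩ := isAssociatedPrime_iff.mp hP
  have hPm : P = maximalIdeal R := eq_maximalIdeal (IsArtinianRing.isMaximal_of_isPrime P)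
  refine ⟨s, ?_, fun x hx => ?_⟩
  · rintro rfl
    exact hPprime.ne_top (by simp [hPs])
  · rw [← hPm, hPs, Submodule.mem_colon_singleton] at hx
    simpa using hx

section LeftInverse

variable {m n : Type*}

theorem Matrix.exists_mul_eq_one_of_injective_mulVecLin [Fintype m] [Fintype n] [DecidableEq m]
    [DecidableEq n] {K : Type*} [Field K] {G : Matrix m n K} (hG : Injective G.mulVecLin) :
    ∃ B : Matrix n m K, B * G = 1 := by
  obtain ⟨g, hg⟩ := G.mulVecLin.exists_leftInverse_of_injective (ker_eq_bot.mpr hG)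
  refine ⟨toMatrix' g, Matrix.toLin'.injective ?_⟩
  rw [Matrix.toLin'_mul, Matrix.toLin'_toMatrix', Matrix.toLin'_apply', hg, Matrix.toLin'_one]

variable {R : Type*} [CommRing R] [IsLocalRing R]

theorem Matrix.injective_mulVecLin_map_residue [Fintype n] [IsArtinianRing R] {G : Matrix m n R}
    (hG : Injective G.mulVecLin) : Injective (G.map (residue R)).mulVecLin := by
  obtain ⟨s, hs0, hs⟩ := exists_ne_zero_forall_mem_maximalIdeal_mul_eq_zero R
  rw [← ker_eq_bot, Submodule.eq_bot_iff]
  intro v hv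
  obtain ⟨w, rfl⟩ : ∃ w : n → R, residue R ∘ w = v :=
    ⟨_, funext fun j => surjInv_eq residue_surjective (v j)⟩
  have hGw : ∀ i, (G *ᵥ w) i ∈ maximalIdeal R := fun i => by
    rw [← residue_eq_zero_iff, RingHom.map_mulVec]
    exact congr_fun hv i
  have hsw : s • w = 0 := hG <| by
    rw [map_zero, Matrix.mulVecLin_apply, Matrix.mulVec_smul]
    funext i
    exact (mul_comm _ _).trans (hs _ (hGw i))
  funext j
  have hwj : w j * s = 0 := by simpa [mul_comm] using congr_fun hsw j
  exact (residue_eq_zero_iff _).mpr fun hu => hs0 ((IsUnit.mul_right_eq_zero hu).mp hwj)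

theorem Matrix.exists_mul_eq_one_of_map_residue [Fintype m] [Fintype n] [DecidableEq n]
    {G : Matrix m n R} {B₀ : Matrix n m (ResidueField R)} (hB₀ : B₀ * G.map (residue R) = 1) :
    ∃ B : Matrix n m R, B * G = 1 := by
  set B := B₀.map (surjInv residue_surjective)
  have hB : B.map (residue R) = B₀ := by
    ext i j
    exact surjInv_eq residue_surjective _
  have hBG : IsUnit (B * G).det := by
    rw [← isUnit_map_iff (residue R), RingHom.map_det, RingHom.mapMatrix_apply, Matrix.map_mul,
      hB, hB₀, Matrix.det_one]
    exact isUnit_one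
  exact ⟨(B * G)⁻¹ * B, by rw [Matrix.mul_assoc, Matrix.nonsing_inv_mul _ hBG]⟩

theorem IsLocalRing.exists_mul_eq_one_of_injective_mulVecLin [Fintype m] [Fintype n]
    [DecidableEq m] [DecidableEq n] [IsArtinianRing R] {G : Matrix m n R}
    (hG : Injective G.mulVecLin) : ∃ B : Matrix n m R, B * G = 1 := by
  obtain ⟨B₀, hB₀⟩ :=
    Matrix.exists_mul_eq_one_of_injective_mulVecLin (Matrix.injective_mulVecLin_map_residue hG)
  exact Matrix.exists_mul_eq_one_of_map_residue hB₀

end LeftInverse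

theorem Submodule.free_of_isCompl {R M : Type*} [CommRing R] [IsLocalRing R] [AddCommGroup M]
    [Module R M] [Module.Projective R M] [Module.Finite R M] {C D : Submodule R M}
    (h : IsCompl C D) : Module.Free R C :=
  have : Module.Projective R C :=
    .of_split C.subtype (C.projectionOnto D h) (LinearMap.ext (C.projectionOnto_apply_left h))
  have : Module.Finite R C := .of_surjective _ (C.projectionOnto_surjective h)
  Module.free_of_flat_of_isLocalRing

theorem Submodule.exists_injective_range_eq_of_free {R M : Type*} [CommRing R]
    [StrongRankCondition R] [AddCommGroup M] [Module R M] (C : Submodule R M) [Module.Free R C]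
    [Module.Finite R C] {k : ℕ} (hk : Module.finrank R C = k) :
    ∃ f : (Fin k → R) →ₗ[R] M, Injective f ∧ range f = C := by
  let e := (Module.finBasisOfFinrankEq R C hk).equivFun.symm
  refine ⟨C.subtype ∘ₗ e.toLinearMap, C.injective_subtype.comp e.injective, ?_⟩
  rw [range_comp, LinearEquiv.range, Submodule.map_top, range_subtype]

/-- Let `p` be a prime, `r ≥ 1`, and `R = ℤ/p^rℤ`. A submodule
`C ⊆ R^n` of rank `k` admits an encoder, i.e. an injective matrix
`G ∈ Mat_{n×k}(R)` whose column space equals `C`, if and only if `C` is a direct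
summand of the `R`-module `R^n`. -/
theorem encoder_iff_splitting (p r n k : ℕ) (hp : p.Prime) (hr : 1 ≤ r)
    (C : Submodule (ZMod (p ^ r)) (Fin n → ZMod (p ^ r)))
    (hrank : Module.rank (ZMod (p ^ r)) C = k) :
    (∃ G : Matrix (Fin n) (Fin k) (ZMod (p ^ r)),
        Function.Injective G.mulVecLin ∧ LinearMap.range G.mulVecLin = C) ↔
      ∃ D : Submodule (ZMod (p ^ r)) (Fin n → ZMod (p ^ r)), IsCompl C D := by
  have : Fact p.Prime := ⟨hp⟩
  have : IsLocalRing (ZMod (p ^ r)) := ZMod.isLocalRing_prime_pow (by omega)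
  constructor
  · rintro ⟨G, hG, rfl⟩
    obtain ⟨B, hB⟩ := IsLocalRing.exists_mul_eq_one_of_injective_mulVecLin hG
    refine ⟨ker B.mulVecLin, isCompl_range_ker_of_comp_eq_id ?_⟩
    rw [← Matrix.mulVecLin_mul, hB, Matrix.mulVecLin_one]
  · rintro ⟨D, hD⟩
    have := Submodule.free_of_isCompl hD
    obtain ⟨f, hf, hfC⟩ := C.exists_injective_range_eq_of_free (Module.finrank_eq_of_rank_eq hrank)
    refine ⟨LinearMap.toMatrix' f, ?_⟩
    rw [← Matrix.toLin'_apply', Matrix.toLin'_toMatrix']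
    exact ⟨hf, hfC⟩
end

section
/- Let p be a prime, r ≥ 1, and R = ℤ/p^rℤ. If C ⊆ R^n is a nonzero splitting linear block code (a direct summand of R^n), then the minimum distance of C equals the minimum distance of its reduction modulo p: min{ω_H(c) : c ∈ C, c ≠ 0} = min{ω_H(c̄) : c̄ ∈ (C mod p), c̄ ≠ 0}. -/
/-!
Multiplying a codeword `c` by `p ^ (r - 1)` gives a codeword whose support is exactly that of
`c mod p`, so `d(C) ≤ d(C mod p)`. Conversely, write a nonzero codeword as `c = p ^ k • d` with
`k < r` and `d ≢ 0 mod p`. As `C` is a direct summand, `d` may be replaced by its projection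
`c' ∈ C`, which still satisfies `p ^ k • c' = c`. Since `p ^ k • x = 0` with `k < r` forces
`x ≡ 0 mod p`, the word `c' mod p` is nonzero, agrees with `d mod p`, and is supported inside the
support of `c`; hence `d(C mod p) ≤ d(C)`.
-/

theorem Nat.sInf_le_sInf_of_forall_exists_le {S T : Set ℕ} (hT : T.Nonempty)
    (h : ∀ t ∈ T, ∃ s ∈ S, s ≤ t) : sInf S ≤ sInf T := by
  obtain ⟨s, hs, hst⟩ := h _ (Nat.sInf_mem hT)
  exact (Nat.sInf_le hs).trans hst

theorem Nat.sInf_eq_sInf_of_forall_exists_le {S T : Set ℕ} (hST : ∀ s ∈ S, ∃ t ∈ T, t ≤ s)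
    (hTS : ∀ t ∈ T, ∃ s ∈ S, s ≤ t) : sInf S = sInf T := by
  rcases S.eq_empty_or_nonempty with rfl | hS
  · have hT : T = ∅ := Set.eq_empty_of_forall_notMem fun t ht => by
      obtain ⟨s, hs, -⟩ := hTS t ht
      exact hs
    rw [hT]
  · obtain ⟨t, ht, -⟩ := hST _ (Nat.sInf_mem hS)
    exact le_antisymm (Nat.sInf_le_sInf_of_forall_exists_le ⟨t, ht⟩ hTS)
      (Nat.sInf_le_sInf_of_forall_exists_le hS hST)

theorem Submodule.exists_mem_smul_eq_of_smul_mem {R M : Type*} [Ring R] [AddCommGroup M]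
    [Module R M] {C D : Submodule R M} (hCD : IsCompl C D) {a : R} {x : M} (hx : a • x ∈ C) :
    ∃ y ∈ C, a • y = a • x :=
  ⟨C.projection D hCD x, C.projection_apply_mem hCD x, by
    rw [← map_smul, C.projection_apply_of_mem_left hCD hx]⟩

section Hamming

variable {ι : Type*} [Fintype ι] {β γ : ι → Type*} [∀ i, Zero (β i)] [∀ i, DecidableEq (β i)]
  [∀ i, Zero (γ i)] [∀ i, DecidableEq (γ i)]

theorem hammingNorm_le_hammingNorm_of_forall_eq_zero_imp {x : ∀ i, β i} {y : ∀ i, γ i}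
    (h : ∀ i, x i = 0 → y i = 0) : hammingNorm y ≤ hammingNorm x :=
  Finset.card_le_card fun i => by
    simp only [Finset.mem_filter, Finset.mem_univ, true_and]
    exact mt (h i)

theorem hammingNorm_eq_hammingNorm_of_forall_eq_zero_iff {x : ∀ i, β i} {y : ∀ i, γ i}
    (h : ∀ i, x i = 0 ↔ y i = 0) : hammingNorm x = hammingNorm y :=
  le_antisymm (hammingNorm_le_hammingNorm_of_forall_eq_zero_imp fun i => (h i).mpr)
    (hammingNorm_le_hammingNorm_of_forall_eq_zero_imp fun i => (h i).mp)

end Hamming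

namespace ZMod

theorem castHom_eq_zero_iff_dvd {m n : ℕ} {h : m ∣ n} (x : ZMod n) :
    castHom h (ZMod m) x = 0 ↔ (m : ZMod n) ∣ x := by
  constructor
  · intro hx
    obtain ⟨a, rfl⟩ := intCast_surjective x
    rw [map_intCast, intCast_zmod_eq_zero_iff_dvd] at hx
    obtain ⟨b, rfl⟩ := hx
    exact ⟨b, by push_cast; rfl⟩
  · rintro ⟨y, rfl⟩
    rw [map_mul, map_natCast, natCast_self, zero_mul]

variable {p r : ℕ} {h : p ∣ p ^ r}

theorem isUnit_iff_castHom_ne_zero (hp : p.Prime) (hr : 0 < r) (x : ZMod (p ^ r)) :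
    IsUnit x ↔ castHom h (ZMod p) x ≠ 0 := by
  have : NeZero p := ⟨hp.ne_zero⟩
  obtain ⟨a, rfl⟩ := natCast_zmod_surjective x
  rw [isUnit_natCast_iff_not_dvd_pow hp hr, map_natCast, Ne, natCast_eq_zero_iff]

theorem castHom_eq_zero_of_pow_mul_eq_zero (hp : p.Prime) {k : ℕ} (hk : k < r)
    {x : ZMod (p ^ r)} (hx : (p : ZMod (p ^ r)) ^ k * x = 0) : castHom h (ZMod p) x = 0 := by
  by_contra hx0
  obtain ⟨u, rfl⟩ := (isUnit_iff_castHom_ne_zero hp (k.zero_le.trans_lt hk) x).mpr hx0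
  have hpk : ((p ^ k : ℕ) : ZMod (p ^ r)) = 0 := by
    rw [Nat.cast_pow]
    exact (Units.mul_left_eq_zero u).mp hx
  rw [natCast_eq_zero_iff, Nat.pow_dvd_pow_iff_le_right hp.one_lt] at hpk
  omega

theorem pow_pred_mul_eq_zero_iff (hp : p.Prime) (hr : 0 < r) (x : ZMod (p ^ r)) :
    (p : ZMod (p ^ r)) ^ (r - 1) * x = 0 ↔ castHom h (ZMod p) x = 0 := by
  refine ⟨castHom_eq_zero_of_pow_mul_eq_zero hp (Nat.sub_lt hr one_pos), fun hx => ?_⟩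
  obtain ⟨y, rfl⟩ := (castHom_eq_zero_iff_dvd x).mp hx
  rw [← mul_assoc, ← pow_succ, Nat.sub_add_cancel hr, ← Nat.cast_pow, natCast_self, zero_mul]

variable {ι : Type*}

theorem exists_eq_pow_smul_castHom_ne_zero {c : ι → ZMod (p ^ r)} (hc : c ≠ 0) :
    ∃ k < r, ∃ d : ι → ZMod (p ^ r),
      c = (p : ZMod (p ^ r)) ^ k • d ∧ (fun i => castHom h (ZMod p) (d i)) ≠ 0 := by
  classical
  let S : ℕ → Prop := fun k => ∃ d : ι → ZMod (p ^ r), c = (p : ZMod (p ^ r)) ^ k • d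
  have hS : S (Nat.findGreatest S r) :=
    Nat.findGreatest_spec r.zero_le ⟨c, by rw [pow_zero, one_smul]⟩
  have hkr : Nat.findGreatest S r < r := by
    refine (Nat.findGreatest_le r).lt_of_ne fun hk => hc ?_
    obtain ⟨d, hd⟩ := hS
    rw [hd, hk, ← Nat.cast_pow, natCast_self, zero_smul]
  obtain ⟨d, hd⟩ := hS
  refine ⟨_, hkr, d, hd, fun hd0 => Nat.findGreatest_is_greatest (Nat.lt_succ_self _) hkr ?_⟩
  -- `d ≡ 0 mod p` would let one more factor `p` be pulled out of `c`.
  choose e he using fun i => (castHom_eq_zero_iff_dvd (d i)).mp (congrFun hd0 i)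
  exact ⟨e, by rw [hd, pow_succ, mul_smul, show d = (p : ZMod (p ^ r)) • e from funext he]⟩

variable [Fintype ι]

theorem hammingNorm_pow_pred_smul (hp : p.Prime) (hr : 0 < r) (v : ι → ZMod (p ^ r)) :
    hammingNorm ((p : ZMod (p ^ r)) ^ (r - 1) • v) =
      hammingNorm (fun i => castHom h (ZMod p) (v i)) :=
  hammingNorm_eq_hammingNorm_of_forall_eq_zero_iff fun i => pow_pred_mul_eq_zero_iff hp hr (v i)

theorem exists_mem_castHom_ne_zero_hammingNorm_le (hp : p.Prime)
    {C D : Submodule (ZMod (p ^ r)) (ι → ZMod (p ^ r))} (hCD : IsCompl C D)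
    {c : ι → ZMod (p ^ r)} (hc : c ∈ C) (hc0 : c ≠ 0) :
    ∃ c' ∈ C, (fun i => castHom h (ZMod p) (c' i)) ≠ 0 ∧
      hammingNorm (fun i => castHom h (ZMod p) (c' i)) ≤ hammingNorm c := by
  obtain ⟨k, hkr, d, rfl, hd⟩ := exists_eq_pow_smul_castHom_ne_zero (h := h) hc0
  obtain ⟨c', hc', hc'd⟩ := Submodule.exists_mem_smul_eq_of_smul_mem hCD hc
  have hreduce : (fun i => castHom h (ZMod p) (c' i)) = fun i => castHom h (ZMod p) (d i) := by
    funext i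
    rw [← sub_eq_zero, ← map_sub]
    refine castHom_eq_zero_of_pow_mul_eq_zero hp hkr ?_
    rw [mul_sub, sub_eq_zero]
    exact congrFun hc'd i
  refine ⟨c', hc', hreduce ▸ hd, hammingNorm_le_hammingNorm_of_forall_eq_zero_imp fun i hi => ?_⟩
  rw [← hc'd] at hi
  exact castHom_eq_zero_of_pow_mul_eq_zero hp hkr hi

end ZMod

theorem minDist_eq_minDist_mod_p_general (p r n : ℕ) (hp : p.Prime) (hr : 1 ≤ r)
    (C : Submodule (ZMod (p ^ r)) (Fin n → ZMod (p ^ r)))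
    (hsplit : ∃ D : Submodule (ZMod (p ^ r)) (Fin n → ZMod (p ^ r)), IsCompl C D) :
    sInf {w : ℕ | ∃ c ∈ C, c ≠ 0 ∧ hammingNorm c = w} =
      sInf {w : ℕ | ∃ cbar ∈ (fun (v : Fin n → ZMod (p ^ r)) (i : Fin n) =>
              ZMod.castHom (dvd_pow_self p (Nat.one_le_iff_ne_zero.mp hr)) (ZMod p) (v i)) ''
            (C : Set (Fin n → ZMod (p ^ r))),
          cbar ≠ 0 ∧ hammingNorm cbar = w} := by
  obtain ⟨D, hCD⟩ := hsplit
  apply Nat.sInf_eq_sInf_of_forall_exists_le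
  · rintro _ ⟨c, hc, hc0, rfl⟩
    obtain ⟨c', hc', hne, hle⟩ := ZMod.exists_mem_castHom_ne_zero_hammingNorm_le hp hCD hc hc0
    exact ⟨_, ⟨_, ⟨c', hc', rfl⟩, hne, rfl⟩, hle⟩
  · rintro _ ⟨_, ⟨c, hc, rfl⟩, hne, rfl⟩
    refine ⟨_, ⟨_, C.smul_mem _ hc, hammingNorm_ne_zero_iff.mp ?_, rfl⟩,
      (ZMod.hammingNorm_pow_pred_smul hp hr c).le⟩
    exact (ZMod.hammingNorm_pow_pred_smul hp hr c).trans_ne (hammingNorm_ne_zero_iff.mpr hne)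

/-- Let `p` be a prime, `r ≥ 1`, and `R = ℤ/p^rℤ`. If
`C ⊆ R^n` is a nonzero splitting linear block code (a direct summand of `R^n`),
then the minimum distance of `C` equals the minimum distance of its reduction
modulo `p`. -/
theorem minDist_eq_minDist_mod_p (p r n : ℕ) (hp : p.Prime) (hr : 1 ≤ r)
    (C : Submodule (ZMod (p ^ r)) (Fin n → ZMod (p ^ r)))
    (hC : C ≠ ⊥)
    (hsplit : ∃ D : Submodule (ZMod (p ^ r)) (Fin n → ZMod (p ^ r)), IsCompl C D) :
    sInf {w : ℕ | ∃ c ∈ C, c ≠ 0 ∧ hammingNorm c = w} =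
      sInf {w : ℕ | ∃ cbar ∈ (fun (v : Fin n → ZMod (p ^ r)) (i : Fin n) =>
              ZMod.castHom (dvd_pow_self p (Nat.one_le_iff_ne_zero.mp hr)) (ZMod p) (v i)) ''
            (C : Set (Fin n → ZMod (p ^ r))),
          cbar ≠ 0 ∧ hammingNorm cbar = w} :=
  minDist_eq_minDist_mod_p_general p r n hp hr C hsplit
end

section
/- Let p be a prime, r ≥ 1, and R = ℤ/p^rℤ. Let C ⊆ R[z]^n be a convolutional code of rank k and let G(z) ∈ Mat_{n×k}(R[z]) be an encoder of C with the Predictable Degree Property, i.e. its column-wise leading coefficient matrix G_h ∈ Mat_{n×k}(R) is injective. Then G(z) has minimal complexity among all encoders of C: for every encoder G'(z) ∈ Mat_{n×k}(R[z]) of C one has δ_{G(z)} ≤ δ_{G'(z)}, where δ denotes the sum of the column degrees. In particular δ_{G(z)} = δ_C. -/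
/-! Two encoders of the same code differ by an invertible matrix, `G' = G U`, and since
`det U` is a unit some permutation `σ` has `U (σ i) i ≠ 0` for every `i`. The coefficient
of `G u` in degree `N = max (deg uᵢ + νᵢ)` is `G_h` applied to the top coefficients of the
`uᵢ`, so when `G_h` is injective `deg (G u) ≥ deg uᵢ + νᵢ` for every `uᵢ ≠ 0`. For the
columns of `U` this gives `ν_{σ i} ≤ ν'ᵢ`, and summing over `i` gives `δ_G ≤ δ_{G'}`. -/

/-- The `i`-th constraint length of a polynomial matrix `G(z)`: the maximum
degree of the entries of the `i`-th column. -/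
def constraintLength {R : Type*} [Semiring R] {n k : ℕ}
    (G : Matrix (Fin n) (Fin k) (Polynomial R)) (i : Fin k) : ℕ :=
  Finset.univ.sup fun j => (G j i).natDegree

/-- The complexity (degree) of a polynomial matrix: the sum of its
constraint lengths. -/
def complexity {R : Type*} [Semiring R] {n k : ℕ}
    (G : Matrix (Fin n) (Fin k) (Polynomial R)) : ℕ :=
  ∑ i, constraintLength G i

/-- The column-wise leading coefficient matrix `G_h` of `G(z)`: its `(j,i)`
entry is the coefficient of `z^{ν_i}` in the `(j,i)` entry of `G(z)`. -/
def leadingCoeffMatrix {R : Type*} [Semiring R] {n k : ℕ}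
    (G : Matrix (Fin n) (Fin k) (Polynomial R)) : Matrix (Fin n) (Fin k) R :=
  fun j i => (G j i).coeff (constraintLength G i)

open Polynomial Matrix

namespace Matrix

variable {R : Type*}

theorem exists_mul_eq_of_range_mulVecLin_le [CommSemiring R] {m n k : Type*} [Fintype n]
    [Fintype k] [DecidableEq k] {A : Matrix m n R} {B : Matrix m k R}
    (h : LinearMap.range B.mulVecLin ≤ LinearMap.range A.mulVecLin) :
    ∃ U : Matrix n k R, A * U = B := by
  have hcol : ∀ j, ∃ u, A *ᵥ u = fun i => B i j := fun j =>
    h ⟨Pi.single j 1, by ext i; simp [mulVec_single]⟩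
  choose u hu using hcol
  exact ⟨(of u)ᵀ, ext fun i j => congrFun (hu j) i⟩

theorem exists_perm_forall_ne_zero_of_det_ne_zero [CommRing R] {n : Type*} [Fintype n]
    [DecidableEq n] {U : Matrix n n R} (hU : U.det ≠ 0) :
    ∃ σ : Equiv.Perm n, ∀ i, U (σ i) i ≠ 0 := by
  contrapose! hU
  rw [det_apply]
  refine Finset.sum_eq_zero fun σ _ => ?_
  obtain ⟨i, hi⟩ := hU σ
  rw [Finset.prod_eq_zero (f := fun l => U (σ l) l) (Finset.mem_univ i) hi, smul_zero]

theorem eq_one_of_mul_eq_self [CommSemiring R] {m n : Type*} [Fintype n] [DecidableEq n]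
    {A : Matrix m n R} (hA : Function.Injective A.mulVecLin)
    {U : Matrix n n R} (h : A * U = A) : U = 1 := by
  refine toLin'.injective (LinearMap.ext fun x => hA ?_)
  simp [mulVec_mulVec, h]

end Matrix

section ConstraintLength

variable {R : Type*} {n k : ℕ}

theorem natDegree_le_constraintLength [Semiring R] (G : Matrix (Fin n) (Fin k) R[X]) (j : Fin n)
    (i : Fin k) : (G j i).natDegree ≤ constraintLength G i :=
  Finset.le_sup (f := fun j => (G j i).natDegree) (Finset.mem_univ j)

theorem coeff_mulVec_eq_leadingCoeffMatrix_mulVec [Semiring R] (G : Matrix (Fin n) (Fin k) R[X])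
    {u : Fin k → R[X]} {N : ℕ}
    (hN : ∀ i, u i ≠ 0 → (u i).natDegree + constraintLength G i ≤ N) (j : Fin n) :
    ((G *ᵥ u) j).coeff N =
      (leadingCoeffMatrix G *ᵥ fun i => (u i).coeff (N - constraintLength G i)) j := by
  simp only [mulVec, dotProduct, finsetSum_coeff]
  refine Finset.sum_congr rfl fun i _ => ?_
  rcases eq_or_ne (u i) 0 with hu | hu
  · simp [hu]
  have hle := hN i hu
  rw [leadingCoeffMatrix, ← coeff_mul_add_eq_of_natDegree_le
    (natDegree_le_constraintLength G j i) (by omega : (u i).natDegree ≤ N - _),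
    Nat.add_sub_cancel' (by omega)]

theorem exists_natDegree_add_constraintLength_le_natDegree_mulVec [CommSemiring R]
    {G : Matrix (Fin n) (Fin k) R[X]}
    (hPDP : Function.Injective (leadingCoeffMatrix G).mulVecLin)
    {u : Fin k → R[X]} {i₀ : Fin k} (hu : u i₀ ≠ 0) :
    ∃ j, (u i₀).natDegree + constraintLength G i₀ ≤ ((G *ᵥ u) j).natDegree := by
  classical
  set S := Finset.univ.filter (u · ≠ 0)
  obtain ⟨i₁, hi₁S, hi₁⟩ := S.exists_mem_eq_sup ⟨i₀, by simpa [S] using hu⟩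
    fun i => (u i).natDegree + constraintLength G i
  set N := S.sup fun i => (u i).natDegree + constraintLength G i
  have hN : ∀ i, u i ≠ 0 → (u i).natDegree + constraintLength G i ≤ N := fun i hi =>
    Finset.le_sup (f := fun i => (u i).natDegree + constraintLength G i) (by simpa [S] using hi)
  have hv : (fun i => (u i).coeff (N - constraintLength G i)) ≠ 0 := fun h => by
    have := congrFun h i₁
    rw [hi₁, Nat.add_sub_cancel] at this
    exact (Finset.mem_filter.1 hi₁S).2 (leadingCoeff_eq_zero.1 this)
  obtain ⟨j, hj⟩ := Function.ne_iff.1 (by simpa using hPDP.ne hv)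
  refine ⟨j, (hN i₀ hu).trans (le_natDegree_of_ne_zero ?_)⟩
  rwa [coeff_mulVec_eq_leadingCoeffMatrix_mulVec G hN]

theorem complexity_le_of_range_eq [CommRing R] [Nontrivial R] {G G' : Matrix (Fin n) (Fin k) R[X]}
    (hGinj : Function.Injective G.mulVecLin)
    (hPDP : Function.Injective (leadingCoeffMatrix G).mulVecLin)
    (hrange : LinearMap.range G'.mulVecLin = LinearMap.range G.mulVecLin) :
    complexity G ≤ complexity G' := by
  obtain ⟨U, hGU⟩ := exists_mul_eq_of_range_mulVecLin_le hrange.le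
  obtain ⟨V, hG'V⟩ := exists_mul_eq_of_range_mulVecLin_le hrange.ge
  have hUV : U * V = 1 :=
    eq_one_of_mul_eq_self hGinj (by rw [← Matrix.mul_assoc, hGU, hG'V])
  obtain ⟨σ, hσ⟩ := exists_perm_forall_ne_zero_of_det_ne_zero
    (isUnit_det_of_right_inverse hUV).ne_zero
  have hcol : ∀ i, constraintLength G (σ i) ≤ constraintLength G' i := fun i => by
    obtain ⟨j, hj⟩ := exists_natDegree_add_constraintLength_le_natDegree_mulVec hPDP
      (u := fun l => U l i) (hσ i)
    calc constraintLength G (σ i)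
        ≤ ((G *ᵥ fun l => U l i) j).natDegree := le_of_add_le_right hj
      _ = (G' j i).natDegree := by rw [← hGU]; rfl
      _ ≤ constraintLength G' i := natDegree_le_constraintLength G' j i
  calc complexity G = ∑ i, constraintLength G (σ i) := (Equiv.sum_comp σ _).symm
    _ ≤ complexity G' := Finset.sum_le_sum fun i _ => hcol i

end ConstraintLength

/-- Let `p` be a prime, `r ≥ 1`, and `R = ℤ/p^rℤ`. Let
`C ⊆ R[z]^n` be a convolutional code of rank `k` and let
`G(z) ∈ Mat_{n×k}(R[z])` be an encoder of `C` with the Predictable Degree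
Property, i.e. its column-wise leading coefficient matrix `G_h ∈ Mat_{n×k}(R)`
is injective. Then `G(z)` has minimal complexity among all encoders of `C`:
for every encoder `G'(z)` of `C` one has `δ_{G(z)} ≤ δ_{G'(z)}`. In particular
`δ_{G(z)} = δ_C`. -/
theorem pdp_encoder_minimal_complexity (p r n k : ℕ) (hp : p.Prime) (hr : 1 ≤ r)
    (C : Submodule (Polynomial (ZMod (p ^ r))) (Fin n → Polynomial (ZMod (p ^ r))))
    (G : Matrix (Fin n) (Fin k) (Polynomial (ZMod (p ^ r))))
    (hGinj : Function.Injective G.mulVecLin)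
    (hGrange : LinearMap.range G.mulVecLin = C)
    (hPDP : Function.Injective (leadingCoeffMatrix G).mulVecLin) :
    (∀ G' : Matrix (Fin n) (Fin k) (Polynomial (ZMod (p ^ r))),
        Function.Injective G'.mulVecLin → LinearMap.range G'.mulVecLin = C →
          complexity G ≤ complexity G') ∧
      complexity G =
        sInf {δ : ℕ | ∃ G' : Matrix (Fin n) (Fin k) (Polynomial (ZMod (p ^ r))),
          Function.Injective G'.mulVecLin ∧ LinearMap.range G'.mulVecLin = C ∧
            complexity G' = δ} := by
  have : Fact (1 < p ^ r) := ⟨Nat.one_lt_pow (by omega) hp.one_lt⟩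
  have hmin : ∀ G' : Matrix (Fin n) (Fin k) (Polynomial (ZMod (p ^ r))),
      LinearMap.range G'.mulVecLin = C → complexity G ≤ complexity G' := fun _ hG' =>
    complexity_le_of_range_eq hGinj hPDP (hG'.trans hGrange.symm)
  refine ⟨fun G' _ => hmin G', .symm <| IsLeast.csInf_eq ⟨⟨G, hGinj, hGrange, rfl⟩, ?_⟩⟩
  rintro _ ⟨G', -, hG', rfl⟩
  exact hmin G' hG'
end

section
/- Let p be a prime, r ≥ 1, and R = ℤ/p^rℤ. Let G ∈ Mat_{n×k}(R) be a matrix whose reduction modulo p, G₀ ∈ Mat_{n×k}(𝔽_p), is injective, and let t ≥ 0 be such that every nonzero codeword of the linear block code Im(G₀) ⊆ 𝔽_p^n has Hamming weight at least 2t+1. If u, u' ∈ R^k and e, e' ∈ R^n satisfy Gu + e = Gu' + e', and for every i ∈ {0, …, r−1} the i-th p-adic digit vectors of e and of e' each have Hamming weight at most t, then u = u' and e = e'. (This expresses that the Greferath–Vellbinger algorithm corrects any error pattern whose p-adic digit components are all correctable by a decoder of correction capability t for the code Im(G₀).) -/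
/-- The `i`-th `p`-adic digit of an element `x ∈ ℤ/p^rℤ`, regarded as an
element of `𝔽_p = ℤ/pℤ`: if `x = Σ_{j<r} x_j p^j` with `0 ≤ x_j < p`, this is
`x_i` mod `p`. -/
def padicDigit (p r : ℕ) (i : ℕ) (x : ZMod (p ^ r)) : ZMod p :=
  ((x.val / p ^ i) % p : ℕ)

/-!
Write `R = ℤ/p^rℤ` and `π : R → 𝔽_p` for reduction. By induction on `i ≤ r` we show that
`u - u'` is divisible by `p^i`. If `u - u' = p^i w`, then `e' = e + p^i G w`, so the `i`-th digit
vectors satisfy `digit_i e' = digit_i e + G₀ (π w)`: the lower digits are untouched and the carry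
lands in higher digits. The difference `G₀ (π w)` is a codeword of weight at most `2t`, hence zero;
injectivity of `G₀` gives `π w = 0`, i.e. `p ∣ w`. At `i = r` this forces `u = u'`, and then
`e = e'`.
-/

open Function Matrix

namespace ZMod

theorem exists_eq_natCast_mul_of_castHom_eq_zero {d m : ℕ} (h : d ∣ m) {x : ZMod m}
    (hx : castHom h (ZMod d) x = 0) : ∃ y : ZMod m, x = d * y := by
  obtain ⟨z, rfl⟩ := intCast_surjective x
  rw [map_intCast, intCast_zmod_eq_zero_iff_dvd] at hx
  obtain ⟨y, rfl⟩ := hx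
  exact ⟨y, by push_cast; rfl⟩

theorem exists_eq_smul_of_castHom_mulVec_eq_zero {d m : ℕ} (h : d ∣ m) {ι κ : Type*}
    [Fintype κ] {G : Matrix ι κ (ZMod m)} (hG₀ : Injective (G.map (castHom h (ZMod d))).mulVecLin)
    {w : κ → ZMod m} (hw : castHom h (ZMod d) ∘ (G *ᵥ w) = 0) :
    ∃ w' : κ → ZMod m, w = (d : ZMod m) • w' := by
  have hπw : castHom h (ZMod d) ∘ w = 0 := hG₀ <| by
    rw [map_zero, ← hw]
    exact funext fun j => (RingHom.map_mulVec _ G w j).symm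
  choose w' hw' using fun a => exists_eq_natCast_mul_of_castHom_eq_zero h (congrFun hπw a)
  exact ⟨w', funext hw'⟩

end ZMod

theorem eq_of_hammingNorm_le_of_sub_mem {ι : Type*} {β : ι → Type*} [Fintype ι]
    [∀ i, AddCommGroup (β i)] [∀ i, DecidableEq (β i)] {C : Set (∀ i, β i)} {t : ℕ}
    (hC : ∀ v ∈ C, v ≠ 0 → 2 * t + 1 ≤ hammingNorm v) {x y : ∀ i, β i}
    (hx : hammingNorm x ≤ t) (hy : hammingNorm y ≤ t) (hxy : y - x ∈ C) : x = y := by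
  by_contra hne
  have hwt := hC _ hxy (sub_ne_zero.mpr (Ne.symm hne))
  have : hammingNorm (y - x) ≤ hammingNorm x + hammingNorm y := by
    rw [sub_eq_neg_add, ← hammingDist_eq_hammingNorm, ← hammingDist_zero_right,
      ← hammingDist_zero_left]
    exact hammingDist_triangle x 0 y
  omega

theorem padicDigit_add_pow_mul {p r i : ℕ} (hp : p ≠ 0) (hi : i < r) (a x : ZMod (p ^ r)) :
    padicDigit p r i (a + (p : ZMod (p ^ r)) ^ i * x) = padicDigit p r i a + x.cast := by
  have : NeZero (p ^ r) := ⟨pow_ne_zero r hp⟩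
  have hval : (a + (p : ZMod (p ^ r)) ^ i * x).val = (a.val + p ^ i * x.val) % p ^ r := by
    rw [← ZMod.val_natCast]
    push_cast
    rw [ZMod.natCast_val, ZMod.natCast_val, ZMod.cast_id, ZMod.cast_id]
  have hsplit : p ^ r = p ^ i * p ^ (r - i) := by rw [← pow_add, Nat.add_sub_cancel' hi.le]
  have hdigit (A B : ℕ) : (A + p ^ i * B) % p ^ r / p ^ i % p = (A / p ^ i + B) % p := by
    rw [hsplit, Nat.mod_mul_right_div_self,
      Nat.mod_mod_of_dvd _ (dvd_pow_self p (Nat.sub_ne_zero_of_lt hi)),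
      Nat.add_mul_div_left _ _ (pow_pos (Nat.pos_of_ne_zero hp) i)]
  rw [padicDigit, padicDigit, hval, hdigit, ZMod.cast_eq_val]
  push_cast [ZMod.natCast_mod]
  rfl

theorem exists_eq_smul_of_eq_add_pow_smul_mulVec {p r i t : ℕ} (hp : p ≠ 0) (hi : i < r)
    (hdvd : p ∣ p ^ r) {ι κ : Type*} [Fintype ι] [Fintype κ] {G : Matrix ι κ (ZMod (p ^ r))}
    (hG₀ : Injective (G.map (ZMod.castHom hdvd (ZMod p))).mulVecLin)
    (hdist : ∀ v ∈ LinearMap.range (G.map (ZMod.castHom hdvd (ZMod p))).mulVecLin,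
      v ≠ 0 → 2 * t + 1 ≤ hammingNorm v)
    {e e' : ι → ZMod (p ^ r)} (he : hammingNorm (fun j => padicDigit p r i (e j)) ≤ t)
    (he' : hammingNorm (fun j => padicDigit p r i (e' j)) ≤ t) {w : κ → ZMod (p ^ r)}
    (heq : e' = e + (p : ZMod (p ^ r)) ^ i • G *ᵥ w) :
    ∃ w' : κ → ZMod (p ^ r), w = (p : ZMod (p ^ r)) • w' := by
  set π := ZMod.castHom hdvd (ZMod p)
  have hdigits : (fun j => padicDigit p r i (e' j))
      = (fun j => padicDigit p r i (e j)) + π ∘ (G *ᵥ w) := by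
    ext j
    simp [heq, padicDigit_add_pow_mul hp hi, π]
  have hcodeword : π ∘ (G *ᵥ w) ∈ LinearMap.range (G.map π).mulVecLin :=
    ⟨π ∘ w, funext fun j => (RingHom.map_mulVec π G w j).symm⟩
  have hsame := eq_of_hammingNorm_le_of_sub_mem hdist he he'
    (by rwa [hdigits, add_sub_cancel_left])
  rw [hdigits, left_eq_add] at hsame
  exact ZMod.exists_eq_smul_of_castHom_mulVec_eq_zero hdvd hG₀ hsame

/-- (Correction capability of the Greferath–Vellbinger
algorithm.) Let `G ∈ Mat_{n×k}(ℤ/p^rℤ)` be a matrix whose reduction modulo `p`,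
`G₀ ∈ Mat_{n×k}(𝔽_p)`, is injective, and let `t` be such that every nonzero
codeword of `Im(G₀) ⊆ 𝔽_p^n` has Hamming weight at least `2t+1`. If
`Gu + e = Gu' + e'` and for every `i ∈ {0,…,r−1}` the `i`-th `p`-adic digit
vectors of `e` and of `e'` each have Hamming weight at most `t`, then `u = u'`
and `e = e'`. -/
theorem greferath_vellbinger_correction (p r n k t : ℕ) (hp : p.Prime) (hr : 1 ≤ r)
    (G : Matrix (Fin n) (Fin k) (ZMod (p ^ r)))
    (hG₀ : Function.Injective
      (G.map (ZMod.castHom (dvd_pow_self p (Nat.one_le_iff_ne_zero.mp hr)) (ZMod p))).mulVecLin)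
    (hdist : ∀ v ∈ LinearMap.range
        (G.map (ZMod.castHom (dvd_pow_self p (Nat.one_le_iff_ne_zero.mp hr)) (ZMod p))).mulVecLin,
      v ≠ 0 → 2 * t + 1 ≤ hammingNorm v)
    (u u' : Fin k → ZMod (p ^ r)) (e e' : Fin n → ZMod (p ^ r))
    (heq : G.mulVec u + e = G.mulVec u' + e')
    (he : ∀ i < r, hammingNorm (fun j => padicDigit p r i (e j)) ≤ t)
    (he' : ∀ i < r, hammingNorm (fun j => padicDigit p r i (e' j)) ≤ t) :
    u = u' ∧ e = e' := by
  have he'_eq : e' = e + G *ᵥ (u - u') := by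
    rw [mulVec_sub]
    linear_combination -heq
  have hdiv : ∀ i ≤ r, ∃ w, u - u' = (p : ZMod (p ^ r)) ^ i • w := by
    intro i
    induction i with
    | zero => exact fun _ => ⟨u - u', by rw [pow_zero, one_smul]⟩
    | succ i ih =>
      intro hi
      obtain ⟨w, hw⟩ := ih (Nat.le_of_succ_le hi)
      rw [hw, mulVec_smul] at he'_eq
      obtain ⟨w', rfl⟩ := exists_eq_smul_of_eq_add_pow_smul_mulVec hp.ne_zero hi _ hG₀ hdist
        (he i hi) (he' i hi) he'_eq
      exact ⟨w', by rw [hw, smul_smul, pow_succ]⟩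
  obtain ⟨w, hw⟩ := hdiv r le_rfl
  have hpr : (p : ZMod (p ^ r)) ^ r = 0 := by exact_mod_cast ZMod.natCast_self (p ^ r)
  obtain rfl : u = u' := sub_eq_zero.mp (by rw [hw, hpr, zero_smul])
  exact ⟨rfl, add_left_cancel heq⟩
end

section
/- Let p be a prime, r ≥ 1, and R = ℤ/p^rℤ. Let H ∈ Mat_{q×n}(R) be a parity-check matrix and let H₀ ∈ Mat_{q×n}(𝔽_p) be its reduction modulo p. Let t ≥ 0 be such that every nonzero element of the linear block code Ker(H₀) ⊆ 𝔽_p^n has Hamming weight at least 2t+1. If e, e' ∈ R^n have the same syndrome, He = He', and for every i ∈ {0, …, r−1} the i-th p-adic digit vectors of e and of e' each have Hamming weight at most t, then e = e'. (This expresses that the adapted Torrecillas–Lobillo–Navarro algorithm corrects any error pattern whose p-adic digit components are all correctable by a decoder of correction capability t for the code Ker(H₀).) -/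
open Matrix

theorem padicDigit_eq_natCast (p r i : ℕ) (x : ZMod (p ^ r)) :
    padicDigit p r i x = ((x.val / p ^ i : ℕ) : ZMod p) :=
  ZMod.natCast_mod _ _

theorem padicDigit_eq_padicDigit_iff {p r i : ℕ} {x y : ZMod (p ^ r)} :
    padicDigit p r i x = padicDigit p r i y ↔ x.val / p ^ i % p = y.val / p ^ i % p := by
  rw [padicDigit_eq_natCast, padicDigit_eq_natCast, ZMod.natCast_eq_natCast_iff']

theorem natCast_sub_natCast_eq_mul_of_mod_eq {R : Type*} [Ring R] {a b m : ℕ}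
    (h : a % m = b % m) : (a : R) - b = m * ((a / m : ℕ) - (b / m : ℕ) : R) := by
  conv_lhs => rw [← Nat.div_add_mod a m, ← Nat.div_add_mod b m, h]
  push_cast
  rw [mul_sub, add_sub_add_right_eq_sub]

theorem hammingNorm_sub_le {ι : Type*} [Fintype ι] {β : ι → Type*} [∀ i, AddCommGroup (β i)]
    [∀ i, DecidableEq (β i)] (x y : ∀ i, β i) :
    hammingNorm (x - y) ≤ hammingNorm x + hammingNorm y := by
  calc hammingNorm (x - y) = hammingDist y x := by
        rw [hammingDist_eq_hammingNorm, neg_add_eq_sub]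
    _ ≤ hammingDist y 0 + hammingDist 0 x := hammingDist_triangle _ _ _
    _ = hammingNorm x + hammingNorm y := by
        rw [hammingDist_zero_right, hammingDist_zero_left, add_comm]

theorem eq_of_map_eq_of_hammingNorm_le {ι R M : Type*} [Fintype ι] [Ring R] [DecidableEq R]
    [AddCommGroup M] [Module R M] (f : (ι → R) →ₗ[R] M) {t : ℕ}
    (hf : ∀ v ∈ LinearMap.ker f, v ≠ 0 → 2 * t + 1 ≤ hammingNorm v) {x y : ι → R}
    (hx : hammingNorm x ≤ t) (hy : hammingNorm y ≤ t) (hxy : f x = f y) : x = y := by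
  by_contra hne
  have hmem : x - y ∈ LinearMap.ker f := by rw [LinearMap.mem_ker, map_sub, hxy, sub_self]
  have := hf _ hmem (sub_ne_zero.mpr hne)
  have := hammingNorm_sub_le x y
  omega

theorem castHom_eq_zero_of_pow_mul_eq_zero {p r i : ℕ} (hp : 0 < p) (hi : i < r)
    (h : p ∣ p ^ r) {z : ZMod (p ^ r)} (hz : (p : ZMod (p ^ r)) ^ i * z = 0) :
    ZMod.castHom h (ZMod p) z = 0 := by
  have : NeZero (p ^ r) := ⟨(pow_pos hp r).ne'⟩
  rw [ZMod.castHom_apply, ZMod.cast_eq_val, ZMod.natCast_eq_zero_iff]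
  have hdvd : p ^ r ∣ p ^ i * z.val := by
    rw [← ZMod.natCast_eq_zero_iff]
    push_cast [ZMod.natCast_val, ZMod.cast_id]
    exact hz
  have : p ^ i * p ∣ p ^ i * z.val := (pow_succ p i ▸ pow_dvd_pow p hi).trans hdvd
  exact Nat.dvd_of_mul_dvd_mul_left (pow_pos hp i) this

theorem mulVec_padicDigit_eq {p r n q i : ℕ} (hp : 0 < p) (hi : i < r) (h : p ∣ p ^ r)
    (H : Matrix (Fin q) (Fin n) (ZMod (p ^ r))) {e e' : Fin n → ZMod (p ^ r)}
    (hsyn : H *ᵥ e = H *ᵥ e') (hlow : ∀ j, (e j).val % p ^ i = (e' j).val % p ^ i) :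
    H.map (ZMod.castHom h (ZMod p)) *ᵥ (fun j => padicDigit p r i (e j)) =
      H.map (ZMod.castHom h (ZMod p)) *ᵥ (fun j => padicDigit p r i (e' j)) := by
  have : NeZero (p ^ r) := ⟨(pow_pos hp r).ne'⟩
  set φ := ZMod.castHom h (ZMod p)
  set y : Fin n → ZMod (p ^ r) := fun j => ((e j).val / p ^ i : ℕ) - ((e' j).val / p ^ i : ℕ)
  have hy : e - e' = (p : ZMod (p ^ r)) ^ i • y := by
    funext j
    simpa [ZMod.natCast_val, ZMod.cast_id] using
      natCast_sub_natCast_eq_mul_of_mod_eq (R := ZMod (p ^ r)) (hlow j)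
  have hHy : (p : ZMod (p ^ r)) ^ i • (H *ᵥ y) = 0 := by
    rw [← mulVec_smul, ← hy, mulVec_sub, hsyn, sub_self]
  have hφy : φ ∘ y = (fun j => padicDigit p r i (e j)) - fun j => padicDigit p r i (e' j) := by
    funext j
    simp [y, padicDigit_eq_natCast]
  rw [← sub_eq_zero, ← mulVec_sub, ← hφy]
  funext k
  rw [← RingHom.map_mulVec]
  exact castHom_eq_zero_of_pow_mul_eq_zero hp hi h (congrFun hHy k)

/-- (Correction capability of the adapted
Torrecillas–Lobillo–Navarro algorithm.) Let `H ∈ Mat_{q×n}(ℤ/p^rℤ)` be a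
parity-check matrix and `H₀ ∈ Mat_{q×n}(𝔽_p)` its reduction modulo `p`. Let `t`
be such that every nonzero element of `Ker(H₀) ⊆ 𝔽_p^n` has Hamming weight at
least `2t+1`. If `e, e' ∈ (ℤ/p^rℤ)^n` have the same syndrome, `He = He'`, and
for every `i ∈ {0,…,r−1}` the `i`-th `p`-adic digit vectors of `e` and of `e'`
each have Hamming weight at most `t`, then `e = e'`. -/
theorem tln_correction (p r n q t : ℕ) (hp : p.Prime) (hr : 1 ≤ r)
    (H : Matrix (Fin q) (Fin n) (ZMod (p ^ r)))
    (hker : ∀ v ∈ LinearMap.ker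
        (H.map (ZMod.castHom (dvd_pow_self p (Nat.one_le_iff_ne_zero.mp hr)) (ZMod p))).mulVecLin,
      v ≠ 0 → 2 * t + 1 ≤ hammingNorm v)
    (e e' : Fin n → ZMod (p ^ r))
    (hsyn : H.mulVec e = H.mulVec e')
    (he : ∀ i < r, hammingNorm (fun j => padicDigit p r i (e j)) ≤ t)
    (he' : ∀ i < r, hammingNorm (fun j => padicDigit p r i (e' j)) ≤ t) :
    e = e' := by
  have : NeZero (p ^ r) := ⟨(pow_pos hp.pos r).ne'⟩
  have hlow : ∀ i ≤ r, ∀ j, (e j).val % p ^ i = (e' j).val % p ^ i := by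
    intro i
    induction i with
    | zero => simp only [pow_zero, Nat.mod_one, implies_true]
    | succ i ih =>
      intro (hi : i < r) j
      have hdigits := eq_of_map_eq_of_hammingNorm_le _ hker (he i hi) (he' i hi)
        (mulVec_padicDigit_eq hp.pos hi _ H hsyn (ih hi.le))
      rw [Nat.mod_pow_succ, Nat.mod_pow_succ, ih hi.le j,
        padicDigit_eq_padicDigit_iff.mp (congrFun hdigits j)]
  funext j
  apply ZMod.val_injective
  simpa [Nat.mod_eq_of_lt (ZMod.val_lt _)] using hlow r le_rfl j
end
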